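/- Let G be triangle-free and J_G = J_{G_1} + J_{G_2} an s-partition. Then J_{G_1} ∩ J_{G_2} has no generators of degree 3; it is generated in degrees ≥ 4. -/
import Mathlib


open MvPolynomial

/-- The polynomial ring `k[x_1,…,x_n,y_1,…,y_n]`:  `Sum.inl i ↦ x_i`, `Sum.inr i ↦ y_i`. -/
abbrev PolyBEI (F : Type) [Field F] (n : ℕ) := MvPolynomial (Fin n ⊕ Fin n) F

/-- The binomial `f_{a,b} = x_a y_b - x_b y_a`. -/
noncomputable def edgeBinomial (F : Type) [Field F] {n : ℕ} (a b : Fin n) : PolyBEI F n :=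
  X (Sum.inl a) * X (Sum.inr b) - X (Sum.inl b) * X (Sum.inr a)

/-- The binomial edge ideal `J_G` of a finite simple graph `G` on `[n]`. -/
noncomputable def binomialEdgeIdeal (F : Type) [Field F] {n : ℕ}
    (G : SimpleGraph (Fin n)) : Ideal (PolyBEI F n) :=
  Ideal.span {f | ∃ a b, G.Adj a b ∧ f = edgeBinomial F a b}

/-- `G \ e` : delete the edge `{u,v}`. -/
def removeEdge {n : ℕ} (G : SimpleGraph (Fin n)) (u v : Fin n) : SimpleGraph (Fin n) :=
  G.deleteEdges {s(u, v)}

/-- `H_e` for `e = {u,v}` : add to `H` all edges among `N_H(u)` and among `N_H(v)`. -/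
def addNbrCliques {n : ℕ} (G : SimpleGraph (Fin n)) (u v : Fin n) : SimpleGraph (Fin n) :=
  G ⊔ SimpleGraph.fromRel (fun a b => (G.Adj u a ∧ G.Adj u b) ∨ (G.Adj v a ∧ G.Adj v b))

/-- `{u,v}` is a cut edge of `G` : it is an edge whose deletion increases the number of
connected components. -/
def IsCutEdge {n : ℕ} (G : SimpleGraph (Fin n)) (u v : Fin n) : Prop :=
  G.Adj u v ∧ Nat.card G.ConnectedComponent < Nat.card (removeEdge G u v).ConnectedComponent

/-- `v` is a free vertex of `G` : its neighbourhood induces a clique. -/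
def IsFreeVertex {n : ℕ} (G : SimpleGraph (Fin n)) (v : Fin n) : Prop :=
  G.IsClique (G.neighborSet v)

/-- The star `G₁` at `s` (edges `{s,k}`, `k ∈ N_G(s)`), as a graph on the same vertex set. -/
def starAt {n : ℕ} (G : SimpleGraph (Fin n)) (s : Fin n) : SimpleGraph (Fin n) :=
  SimpleGraph.fromRel (fun a b => a = s ∧ G.Adj s b)

/-- `G \ {s}` : delete the vertex `s` (keeping it as an isolated vertex, which does not
change the binomial edge ideal). -/
def minusVertex {n : ℕ} (G : SimpleGraph (Fin n)) (s : Fin n) : SimpleGraph (Fin n) :=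
  SimpleGraph.fromRel (fun a b => G.Adj a b ∧ a ≠ s ∧ b ≠ s)

namespace SPart

open Finsupp Sum

variable {F : Type} [Field F] {n : ℕ}

/-- `sgl i` is the exponent vector of the variable `X i`. -/
noncomputable def sgl {n : ℕ} (i : Fin n ⊕ Fin n) : (Fin n ⊕ Fin n) →₀ ℕ := Finsupp.single i 1

lemma sgl_apply {i j : Fin n ⊕ Fin n} : sgl i j = if i = j then 1 else 0 :=
  Finsupp.single_apply

lemma edgeBinomial_swap (a b : Fin n) : edgeBinomial F b a = - edgeBinomial F a b := by
  simp only [edgeBinomial]; ring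

lemma edgeBinomial_isHomogeneous (a b : Fin n) : (edgeBinomial F a b).IsHomogeneous 2 := by
  apply MvPolynomial.IsHomogeneous.sub <;>
    exact (isHomogeneous_X F _).mul (isHomogeneous_X F _)

lemma XX_eq (u v : Fin n ⊕ Fin n) :
    (X u * X v : PolyBEI F n) = monomial (sgl u + sgl v) 1 := by
  rw [X, X, monomial_mul, one_mul]; rfl

lemma support_edgeBinomial (a b : Fin n) :
    (edgeBinomial F a b).support ⊆
      {sgl (inl a) + sgl (inr b), sgl (inl b) + sgl (inr a)} := by
  classical
  intro m hm
  rcases Finset.mem_union.1 (MvPolynomial.support_sub _ _ _ hm) with h | h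
  · rw [XX_eq] at h
    have := MvPolynomial.support_monomial_subset h
    simp only [Finset.mem_singleton] at this
    simp [this]
  · rw [XX_eq] at h
    have := MvPolynomial.support_monomial_subset h
    simp only [Finset.mem_singleton] at this
    simp [this]

/-- An ideal defined by an upward-closed condition on the supports. -/
def shapeIdeal (P : ((Fin n ⊕ Fin n) →₀ ℕ) → Prop)
    (hP : ∀ m₁ m₂, P m₂ → P (m₁ + m₂)) : Ideal (PolyBEI F n) where
  carrier := {g | ∀ m ∈ g.support, P m}
  zero_mem' := by simp
  add_mem' := by
    classical
    intro p q hp hq m hm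
    rcases Finset.mem_union.1 (MvPolynomial.support_add hm) with h | h
    exacts [hp m h, hq m h]
  smul_mem' := by
    classical
    intro r g hg m hm
    rw [smul_eq_mul] at hm
    obtain ⟨m1, hm1, m2, hm2, rfl⟩ := Finset.mem_add.1 (MvPolynomial.support_mul r g hm)
    exact hP m1 m2 (hg m2 hm2)

lemma mem_shapeIdeal {P hP} {g : PolyBEI F n} :
    g ∈ shapeIdeal P hP ↔ ∀ m ∈ g.support, P m := Iff.rfl

end SPart

namespace SPart
open Finsupp Sum

variable {F : Type} [Field F] {n : ℕ} {G : SimpleGraph (Fin n)} {s : Fin n}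

lemma minus_adj {a b : Fin n} :
    (minusVertex G s).Adj a b ↔ G.Adj a b ∧ a ≠ s ∧ b ≠ s := by
  simp only [minusVertex, SimpleGraph.fromRel_adj]
  constructor
  · rintro ⟨hne, ⟨h, h1, h2⟩ | ⟨h, h1, h2⟩⟩
    exacts [⟨h, h1, h2⟩, ⟨h.symm, h2, h1⟩]
  · rintro ⟨h, h1, h2⟩
    exact ⟨h.ne, Or.inl ⟨h, h1, h2⟩⟩

lemma pair_app_left (u v : Fin n ⊕ Fin n) : 1 ≤ (sgl u + sgl v) u := by
  have : (sgl u + sgl v) u = 1 + sgl v u := by simp [Finsupp.add_apply, sgl_apply]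
  omega

lemma pair_app_right (u v : Fin n ⊕ Fin n) : 1 ≤ (sgl u + sgl v) v := by
  have : (sgl u + sgl v) v = sgl u v + 1 := by simp [Finsupp.add_apply, sgl_apply]
  omega

lemma pair_bound (u v : Fin n ⊕ Fin n) (c : Fin n)
    (hc : u = inl c ∨ u = inr c ∨ v = inl c ∨ v = inr c) :
    1 ≤ (sgl u + sgl v) (inl c) + (sgl u + sgl v) (inr c) := by
  have h1 := pair_app_left u v
  have h2 := pair_app_right u v
  rcases hc with rfl | rfl | rfl | rfl <;> omega

lemma suppJ1 {g : PolyBEI F n} (hg : g ∈ binomialEdgeIdeal F (starAt G s)) :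
    ∀ m ∈ g.support, 1 ≤ m (inl s) + m (inr s) := by
  classical
  have hup : ∀ m₁ m₂ : (Fin n ⊕ Fin n) →₀ ℕ,
      (1 ≤ m₂ (inl s) + m₂ (inr s)) → 1 ≤ (m₁ + m₂) (inl s) + (m₁ + m₂) (inr s) := by
    intro m₁ m₂ h
    simp only [Finsupp.add_apply]
    omega
  have hle : binomialEdgeIdeal F (starAt G s) ≤ shapeIdeal _ hup := by
    rw [binomialEdgeIdeal, Ideal.span_le]
    rintro f ⟨a, b, hab, rfl⟩
    intro m hm
    rw [starAt, SimpleGraph.fromRel_adj] at hab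
    rcases Finset.mem_insert.1 (support_edgeBinomial _ _ hm) with h | h
    · subst h
      obtain ⟨hne, ⟨rfl, hadj⟩ | ⟨rfl, hadj⟩⟩ := hab
      · exact pair_bound _ _ _ (by tauto)
      · exact pair_bound _ _ _ (by tauto)
    · rw [Finset.mem_singleton] at h
      subst h
      obtain ⟨hne, ⟨rfl, hadj⟩ | ⟨rfl, hadj⟩⟩ := hab
      · exact pair_bound _ _ _ (by tauto)
      · exact pair_bound _ _ _ (by tauto)
  exact hle hg

lemma suppJ2 {g : PolyBEI F n} (hg : g ∈ binomialEdgeIdeal F (minusVertex G s)) :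
    ∀ m ∈ g.support, ∃ a b, G.Adj a b ∧ a ≠ s ∧ b ≠ s ∧ 1 ≤ m (inl a) ∧ 1 ≤ m (inr b) := by
  classical
  have hup : ∀ m₁ m₂ : (Fin n ⊕ Fin n) →₀ ℕ,
      (∃ a b, G.Adj a b ∧ a ≠ s ∧ b ≠ s ∧ 1 ≤ m₂ (inl a) ∧ 1 ≤ m₂ (inr b)) →
      (∃ a b, G.Adj a b ∧ a ≠ s ∧ b ≠ s ∧ 1 ≤ (m₁ + m₂) (inl a) ∧ 1 ≤ (m₁ + m₂) (inr b)) := by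
    rintro m₁ m₂ ⟨a, b, h, h1, h2, h3, h4⟩
    refine ⟨a, b, h, h1, h2, ?_, ?_⟩ <;> simp only [Finsupp.add_apply] <;> omega
  have hle : binomialEdgeIdeal F (minusVertex G s) ≤ shapeIdeal _ hup := by
    rw [binomialEdgeIdeal, Ideal.span_le]
    rintro f ⟨a, b, hab, rfl⟩
    intro m hm
    rw [minus_adj] at hab
    obtain ⟨hadj, ha, hb⟩ := hab
    rcases Finset.mem_insert.1 (support_edgeBinomial _ _ hm) with h | h
    · subst h
      exact ⟨a, b, hadj, ha, hb, pair_app_left _ _, pair_app_right _ _⟩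
    · rw [Finset.mem_singleton] at h
      subst h
      exact ⟨b, a, hadj.symm, hb, ha, pair_app_left _ _, pair_app_right _ _⟩
  exact hle hg

/-- normalized generating set for the star ideal -/
def starSet (F : Type) [Field F] {n : ℕ} (G : SimpleGraph (Fin n)) (s : Fin n) :
    Set (PolyBEI F n) := {f | ∃ k, G.Adj s k ∧ f = edgeBinomial F s k}

lemma star_span : binomialEdgeIdeal F (starAt G s) = Ideal.span (starSet F G s) := by
  apply le_antisymm
  · rw [binomialEdgeIdeal, Ideal.span_le]
    rintro f ⟨a, b, hab, rfl⟩
    rw [starAt, SimpleGraph.fromRel_adj] at hab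
    obtain ⟨hne, ⟨rfl, hadj⟩ | ⟨rfl, hadj⟩⟩ := hab
    · exact Ideal.subset_span ⟨b, hadj, rfl⟩
    · rw [edgeBinomial_swap]
      exact neg_mem (Ideal.subset_span ⟨a, hadj, rfl⟩)
  · rw [Ideal.span_le]
    rintro f ⟨k, hk, rfl⟩
    refine Ideal.subset_span ⟨s, k, ?_, rfl⟩
    rw [starAt, SimpleGraph.fromRel_adj]
    exact ⟨hk.ne, Or.inl ⟨rfl, hk⟩⟩

end SPart

namespace SPart
open Finsupp Sum MvPolynomial

variable {F : Type} [Field F] {n : ℕ}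

lemma coeff_mul_XX (r : PolyBEI F n) (u v : Fin n ⊕ Fin n) (m : (Fin n ⊕ Fin n) →₀ ℕ) :
    coeff m (r * (X u * X v)) =
      if 1 ≤ m v ∧ 1 ≤ (m - sgl v) u then coeff (m - sgl v - sgl u) r else 0 := by
  classical
  rw [← mul_assoc, coeff_mul_X', show Finsupp.single v (1:ℕ) = sgl v from rfl]
  by_cases h1 : 1 ≤ m v
  · rw [if_pos (show v ∈ m.support from Finsupp.mem_support_iff.2 (by omega)), coeff_mul_X',
      show Finsupp.single u (1:ℕ) = sgl u from rfl]
    by_cases h2 : 1 ≤ (m - sgl v) u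
    · rw [if_pos (show u ∈ (m - sgl v).support from Finsupp.mem_support_iff.2 (by omega)),
        if_pos ⟨h1, h2⟩]
    · rw [if_neg (show u ∉ (m - sgl v).support from fun hc =>
          h2 (Nat.one_le_iff_ne_zero.2 (Finsupp.mem_support_iff.1 hc))),
        if_neg (fun hc => h2 hc.2)]
  · rw [if_neg (show v ∉ m.support from fun hc =>
        h1 (Nat.one_le_iff_ne_zero.2 (Finsupp.mem_support_iff.1 hc))),
      if_neg (fun hc => h1 hc.1)]

lemma coeff_mul_edgeBinomial (r : PolyBEI F n) (a b : Fin n) (m : (Fin n ⊕ Fin n) →₀ ℕ) :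
    coeff m (r * edgeBinomial F a b) =
      (if 1 ≤ m (inr b) ∧ 1 ≤ (m - sgl (inr b)) (inl a) then
        coeff (m - sgl (inr b) - sgl (inl a)) r else 0)
      - (if 1 ≤ m (inr a) ∧ 1 ≤ (m - sgl (inr a)) (inl b) then
        coeff (m - sgl (inr a) - sgl (inl b)) r else 0) := by
  rw [edgeBinomial, mul_sub, coeff_sub, coeff_mul_XX, coeff_mul_XX]

-- subtraction helpers
lemma sub3_right (x y z : Fin n ⊕ Fin n) : (sgl x + sgl y + sgl z) - sgl z = sgl x + sgl y := by
  ext i; simp only [Finsupp.tsub_apply, Finsupp.add_apply]; omega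

lemma sub3_mid (x y z : Fin n ⊕ Fin n) : (sgl x + sgl y + sgl z) - sgl y = sgl x + sgl z := by
  ext i; simp only [Finsupp.tsub_apply, Finsupp.add_apply]; omega

lemma sub3_left (x y z : Fin n ⊕ Fin n) : (sgl x + sgl y + sgl z) - sgl x = sgl y + sgl z := by
  ext i; simp only [Finsupp.tsub_apply, Finsupp.add_apply]; omega

lemma sub2_left (x y : Fin n ⊕ Fin n) : (sgl x + sgl y) - sgl x = sgl y := by
  ext i; simp only [Finsupp.tsub_apply, Finsupp.add_apply]; omega

lemma sub2_right (x y : Fin n ⊕ Fin n) : (sgl x + sgl y) - sgl y = sgl x := by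
  ext i; simp only [Finsupp.tsub_apply, Finsupp.add_apply]; omega

lemma app3 (x y z i : Fin n ⊕ Fin n) :
    (sgl x + sgl y + sgl z) i =
      (if x = i then 1 else 0) + (if y = i then 1 else 0) + (if z = i then 1 else 0) := by
  simp [Finsupp.add_apply, sgl_apply]

lemma app2 (x y i : Fin n ⊕ Fin n) :
    (sgl x + sgl y) i = (if x = i then 1 else 0) + (if y = i then 1 else 0) := by
  simp [Finsupp.add_apply, sgl_apply]

end SPart

namespace SPart
open Finsupp Sum MvPolynomial

variable {F : Type} [Field F] {n : ℕ}

section Gens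

variable (r : PolyBEI F n) (s a b k : Fin n)

lemma g1alpha (ha : a ≠ s) (hb : b ≠ s) :
    coeff (sgl (inl s) + sgl (inl a) + sgl (inr b)) (r * edgeBinomial F s k)
      = if k = b then coeff (sgl (inl a)) r else 0 := by
  rw [coeff_mul_edgeBinomial]
  have h2 : (sgl (inl s) + sgl (inl a) + sgl (inr b)) ((inr s : Fin n ⊕ Fin n)) = 0 := by
    rw [app3]; simp [hb]
  rw [if_neg (show ¬(1 ≤ (sgl (inl s) + sgl (inl a) + sgl (inr b)) ((inr s : Fin n ⊕ Fin n)) ∧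
      1 ≤ ((sgl (inl s) + sgl (inl a) + sgl (inr b)) - sgl (inr s)) ((inl k : Fin n ⊕ Fin n)))
      from fun hc => absurd hc.1 (by omega))]
  by_cases hkb : k = b
  · have c1 : 1 ≤ (sgl (inl s) + sgl (inl a) + sgl (inr b)) ((inr k : Fin n ⊕ Fin n)) := by
      rw [app3]; simp [hkb]
    have c2 : 1 ≤ ((sgl (inl s) + sgl (inl a) + sgl (inr b)) - sgl (inr k))
        ((inl s : Fin n ⊕ Fin n)) := by
      rw [hkb, sub3_right, app2]; simp
    rw [if_pos ⟨c1, c2⟩, if_pos hkb, hkb, sub3_right, sub2_left, sub_zero]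
  · have c1 : (sgl (inl s) + sgl (inl a) + sgl (inr b)) ((inr k : Fin n ⊕ Fin n)) = 0 := by
      rw [app3]; simp [Ne.symm hkb]
    rw [if_neg (fun hc => absurd hc.1 (by omega)), if_neg hkb, sub_zero]

lemma g1beta (ha : a ≠ s) (hb : b ≠ s) :
    coeff (sgl (inr s) + sgl (inl a) + sgl (inr b)) (r * edgeBinomial F s k)
      = if k = a then -coeff (sgl (inr b)) r else 0 := by
  rw [coeff_mul_edgeBinomial]
  have h2 : ((sgl (inr s) + sgl (inl a) + sgl (inr b)) - sgl (inr k))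
      ((inl s : Fin n ⊕ Fin n)) = 0 := by
    rw [Finsupp.tsub_apply, app3, sgl_apply]; simp [ha]
  rw [if_neg (fun hc => absurd hc.2 (by omega))]
  have c1 : 1 ≤ (sgl (inr s) + sgl (inl a) + sgl (inr b)) ((inr s : Fin n ⊕ Fin n)) := by
    rw [app3]; simp
  by_cases hka : k = a
  · have c2 : 1 ≤ ((sgl (inr s) + sgl (inl a) + sgl (inr b)) - sgl (inr s))
        ((inl k : Fin n ⊕ Fin n)) := by
      rw [sub3_left, app2]; simp [hka]
    rw [if_pos ⟨c1, c2⟩, if_pos hka, sub3_left, hka, sub2_left, zero_sub]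
  · have c2 : ((sgl (inr s) + sgl (inl a) + sgl (inr b)) - sgl (inr s))
        ((inl k : Fin n ⊕ Fin n)) = 0 := by
      rw [sub3_left, app2]; simp [Ne.symm hka]
    rw [if_neg (fun hc => absurd hc.2 (by omega)), if_neg hka, zero_sub, neg_zero]

lemma g1gamma (ha : a ≠ s) (hb : b ≠ s) (hk : k ≠ s) (hab : a ≠ b) :
    coeff (sgl (inr s) + sgl (inl a) + sgl (inl b)) (r * edgeBinomial F s k)
      = -((if k = b then coeff (sgl (inl a)) r else 0)
          + (if k = a then coeff (sgl (inl b)) r else 0)) := by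
  rw [coeff_mul_edgeBinomial]
  have h1 : (sgl (inr s) + sgl (inl a) + sgl (inl b)) ((inr k : Fin n ⊕ Fin n)) = 0 := by
    rw [app3]; simp [Ne.symm hk]
  rw [if_neg (fun hc => absurd hc.1 (by omega))]
  have c1 : 1 ≤ (sgl (inr s) + sgl (inl a) + sgl (inl b)) ((inr s : Fin n ⊕ Fin n)) := by
    rw [app3]; simp
  by_cases hka : k = a
  · have hkb : ¬ k = b := by rw [hka]; exact hab
    have c2 : 1 ≤ ((sgl (inr s) + sgl (inl a) + sgl (inl b)) - sgl (inr s))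
        ((inl k : Fin n ⊕ Fin n)) := by
      rw [sub3_left, app2]; simp [hka]
    rw [if_pos ⟨c1, c2⟩, if_neg hkb, if_pos hka, sub3_left, hka, sub2_left, zero_sub, zero_add]
  · by_cases hkb : k = b
    · have c2 : 1 ≤ ((sgl (inr s) + sgl (inl a) + sgl (inl b)) - sgl (inr s))
          ((inl k : Fin n ⊕ Fin n)) := by
        rw [sub3_left, app2]; simp [hkb]
      rw [if_pos ⟨c1, c2⟩, if_pos hkb, if_neg hka, sub3_left, hkb, sub2_right, zero_sub, add_zero]
    · have c2 : ((sgl (inr s) + sgl (inl a) + sgl (inl b)) - sgl (inr s))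
          ((inl k : Fin n ⊕ Fin n)) = 0 := by
        rw [sub3_left, app2]; simp [Ne.symm hka, Ne.symm hkb]
      rw [if_neg (fun hc => absurd hc.2 (by omega)), if_neg hka, if_neg hkb]
      simp

lemma g1delta (ha : a ≠ s) (hb : b ≠ s) (hab : a ≠ b) :
    coeff (sgl (inl s) + sgl (inr a) + sgl (inr b)) (r * edgeBinomial F s k)
      = -((if k = a then -coeff (sgl (inr b)) r else 0)
          + (if k = b then -coeff (sgl (inr a)) r else 0)) := by
  rw [coeff_mul_edgeBinomial]
  have h2 : (sgl (inl s) + sgl (inr a) + sgl (inr b)) ((inr s : Fin n ⊕ Fin n)) = 0 := by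
    rw [app3]; simp [ha, hb]
  rw [if_neg (show ¬(1 ≤ (sgl (inl s) + sgl (inr a) + sgl (inr b)) ((inr s : Fin n ⊕ Fin n)) ∧
      1 ≤ ((sgl (inl s) + sgl (inr a) + sgl (inr b)) - sgl (inr s)) ((inl k : Fin n ⊕ Fin n)))
      from fun hc => absurd hc.1 (by omega))]
  by_cases hka : k = a
  · have hkb : ¬ k = b := by rw [hka]; exact hab
    have c1 : 1 ≤ (sgl (inl s) + sgl (inr a) + sgl (inr b)) ((inr k : Fin n ⊕ Fin n)) := by
      rw [app3]; simp [hka]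
    have c2 : 1 ≤ ((sgl (inl s) + sgl (inr a) + sgl (inr b)) - sgl (inr k))
        ((inl s : Fin n ⊕ Fin n)) := by
      rw [hka, sub3_mid, app2]; simp
    rw [if_pos ⟨c1, c2⟩, if_pos hka, if_neg hkb, hka, sub3_mid, sub2_left, sub_zero, add_zero,
      neg_neg]
  · by_cases hkb : k = b
    · have c1 : 1 ≤ (sgl (inl s) + sgl (inr a) + sgl (inr b)) ((inr k : Fin n ⊕ Fin n)) := by
        rw [app3]; simp [hkb]
      have c2 : 1 ≤ ((sgl (inl s) + sgl (inr a) + sgl (inr b)) - sgl (inr k))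
          ((inl s : Fin n ⊕ Fin n)) := by
        rw [hkb, sub3_right, app2]; simp
      rw [if_pos ⟨c1, c2⟩, if_pos hkb, if_neg hka, hkb, sub3_right, sub2_left, sub_zero, zero_add,
        neg_neg]
    · have c1 : (sgl (inl s) + sgl (inr a) + sgl (inr b)) ((inr k : Fin n ⊕ Fin n)) = 0 := by
        rw [app3]; simp [Ne.symm hka, Ne.symm hkb]
      rw [if_neg (fun hc => absurd hc.1 (by omega)), if_neg hka, if_neg hkb]
      simp

end Gens

section Gens2

variable (r : PolyBEI F n) {G : SimpleGraph (Fin n)} (s a b a' b' : Fin n)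

lemma g2alpha (ha' : a' ≠ s) (hb' : b' ≠ s) (hadj : G.Adj a' b') (hnadj : ¬ G.Adj a b) :
    coeff (sgl (inl s) + sgl (inl a) + sgl (inr b)) (r * edgeBinomial F a' b') = 0 := by
  rw [coeff_mul_edgeBinomial]
  have t1 : (if 1 ≤ (sgl (inl s) + sgl (inl a) + sgl (inr b)) ((inr b' : Fin n ⊕ Fin n)) ∧
      1 ≤ ((sgl (inl s) + sgl (inl a) + sgl (inr b)) - sgl (inr b')) ((inl a' : Fin n ⊕ Fin n))
      then coeff ((sgl (inl s) + sgl (inl a) + sgl (inr b)) - sgl (inr b') - sgl (inl a')) r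
      else 0) = 0 := by
    by_cases hbb : b' = b
    · by_cases haa : a' = a
      · exact ((hnadj (by rwa [haa, hbb] at hadj)).elim)
      · have hz : ((sgl (inl s) + sgl (inl a) + sgl (inr b)) - sgl (inr b'))
            ((inl a' : Fin n ⊕ Fin n)) = 0 := by
          rw [Finsupp.tsub_apply, app3, sgl_apply]
          simp [Ne.symm ha', Ne.symm haa]
        exact if_neg (fun hc => absurd hc.2 (by omega))
    · have hz : (sgl (inl s) + sgl (inl a) + sgl (inr b)) ((inr b' : Fin n ⊕ Fin n)) = 0 := by
        rw [app3]; simp [Ne.symm hbb]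
      exact if_neg (fun hc => absurd hc.1 (by omega))
  have t2 : (if 1 ≤ (sgl (inl s) + sgl (inl a) + sgl (inr b)) ((inr a' : Fin n ⊕ Fin n)) ∧
      1 ≤ ((sgl (inl s) + sgl (inl a) + sgl (inr b)) - sgl (inr a')) ((inl b' : Fin n ⊕ Fin n))
      then coeff ((sgl (inl s) + sgl (inl a) + sgl (inr b)) - sgl (inr a') - sgl (inl b')) r
      else 0) = 0 := by
    by_cases hbb : a' = b
    · by_cases haa : b' = a
      · exact ((hnadj (by rw [hbb, haa] at hadj; exact hadj.symm)).elim)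
      · have hz : ((sgl (inl s) + sgl (inl a) + sgl (inr b)) - sgl (inr a'))
            ((inl b' : Fin n ⊕ Fin n)) = 0 := by
          rw [Finsupp.tsub_apply, app3, sgl_apply]
          simp [Ne.symm hb', Ne.symm haa]
        exact if_neg (fun hc => absurd hc.2 (by omega))
    · have hz : (sgl (inl s) + sgl (inl a) + sgl (inr b)) ((inr a' : Fin n ⊕ Fin n)) = 0 := by
        rw [app3]; simp [Ne.symm hbb]
      exact if_neg (fun hc => absurd hc.1 (by omega))
  rw [t1, t2, sub_zero]

lemma g2beta (ha' : a' ≠ s) (hb' : b' ≠ s) (hadj : G.Adj a' b') (hnadj : ¬ G.Adj a b) :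
    coeff (sgl (inr s) + sgl (inl a) + sgl (inr b)) (r * edgeBinomial F a' b') = 0 := by
  rw [coeff_mul_edgeBinomial]
  have t1 : (if 1 ≤ (sgl (inr s) + sgl (inl a) + sgl (inr b)) ((inr b' : Fin n ⊕ Fin n)) ∧
      1 ≤ ((sgl (inr s) + sgl (inl a) + sgl (inr b)) - sgl (inr b')) ((inl a' : Fin n ⊕ Fin n))
      then coeff ((sgl (inr s) + sgl (inl a) + sgl (inr b)) - sgl (inr b') - sgl (inl a')) r
      else 0) = 0 := by
    by_cases hbb : b' = b
    · by_cases haa : a' = a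
      · exact ((hnadj (by rwa [haa, hbb] at hadj)).elim)
      · have hz : ((sgl (inr s) + sgl (inl a) + sgl (inr b)) - sgl (inr b'))
            ((inl a' : Fin n ⊕ Fin n)) = 0 := by
          rw [Finsupp.tsub_apply, app3, sgl_apply]
          simp [Ne.symm haa]
        exact if_neg (fun hc => absurd hc.2 (by omega))
    · have hz : (sgl (inr s) + sgl (inl a) + sgl (inr b)) ((inr b' : Fin n ⊕ Fin n)) = 0 := by
        rw [app3]; simp [Ne.symm hb', Ne.symm hbb]
      exact if_neg (fun hc => absurd hc.1 (by omega))
  have t2 : (if 1 ≤ (sgl (inr s) + sgl (inl a) + sgl (inr b)) ((inr a' : Fin n ⊕ Fin n)) ∧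
      1 ≤ ((sgl (inr s) + sgl (inl a) + sgl (inr b)) - sgl (inr a')) ((inl b' : Fin n ⊕ Fin n))
      then coeff ((sgl (inr s) + sgl (inl a) + sgl (inr b)) - sgl (inr a') - sgl (inl b')) r
      else 0) = 0 := by
    by_cases hbb : a' = b
    · by_cases haa : b' = a
      · exact ((hnadj (by rw [hbb, haa] at hadj; exact hadj.symm)).elim)
      · have hz : ((sgl (inr s) + sgl (inl a) + sgl (inr b)) - sgl (inr a'))
            ((inl b' : Fin n ⊕ Fin n)) = 0 := by
          rw [Finsupp.tsub_apply, app3, sgl_apply]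
          simp [Ne.symm haa]
        exact if_neg (fun hc => absurd hc.2 (by omega))
    · have hz : (sgl (inr s) + sgl (inl a) + sgl (inr b)) ((inr a' : Fin n ⊕ Fin n)) = 0 := by
        rw [app3]; simp [Ne.symm ha', Ne.symm hbb]
      exact if_neg (fun hc => absurd hc.1 (by omega))
  rw [t1, t2, sub_zero]

end Gens2

end SPart

namespace SPart
open Finsupp Sum MvPolynomial

variable {F : Type} [Field F] {n : ℕ} {G : SimpleGraph (Fin n)} {s : Fin n}

lemma rep_coeff {T : Set (PolyBEI F n)} {p : PolyBEI F n} (hp : p ∈ Ideal.span T) :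
    ∃ c : PolyBEI F n →₀ PolyBEI F n, ↑c.support ⊆ T ∧
      ∀ m, coeff m p = ∑ f ∈ c.support, coeff m (c f * f) := by
  obtain ⟨c, hc, hsum⟩ := Submodule.mem_span_set.1 hp
  refine ⟨c, hc, fun m => ?_⟩
  rw [← hsum, Finsupp.sum, coeff_sum]
  exact Finset.sum_congr rfl (fun f _ => by rw [smul_eq_mul])

section Facts

variable {p : PolyBEI F n}

lemma factL1 (hp1 : p ∈ binomialEdgeIdeal F (starAt G s)) (a b : Fin n)
    (ha : a ≠ s) (hb : b ≠ s) (hnb : ¬ G.Adj s b) :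
    coeff (sgl (inl s) + sgl (inl a) + sgl (inr b)) p = 0 := by
  rw [star_span] at hp1
  obtain ⟨c, hc, hco⟩ := rep_coeff hp1
  rw [hco]
  refine Finset.sum_eq_zero fun f hf => ?_
  obtain ⟨k, hk, rfl⟩ := hc hf
  rw [g1alpha _ _ _ _ _ ha hb, if_neg (show ¬ k = b from fun h => hnb (h ▸ hk))]

lemma factL2 (hp1 : p ∈ binomialEdgeIdeal F (starAt G s)) (a b : Fin n)
    (ha : a ≠ s) (hb : b ≠ s) (hna : ¬ G.Adj s a) :
    coeff (sgl (inr s) + sgl (inl a) + sgl (inr b)) p = 0 := by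
  rw [star_span] at hp1
  obtain ⟨c, hc, hco⟩ := rep_coeff hp1
  rw [hco]
  refine Finset.sum_eq_zero fun f hf => ?_
  obtain ⟨k, hk, rfl⟩ := hc hf
  rw [g1beta _ _ _ _ _ ha hb, if_neg (show ¬ k = a from fun h => hna (h ▸ hk))]

lemma factL3 (hp2 : p ∈ binomialEdgeIdeal F (minusVertex G s)) (a b : Fin n)
    (hnadj : ¬ G.Adj a b) :
    coeff (sgl (inl s) + sgl (inl a) + sgl (inr b)) p = 0 := by
  rw [binomialEdgeIdeal] at hp2
  obtain ⟨c, hc, hco⟩ := rep_coeff hp2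
  rw [hco]
  refine Finset.sum_eq_zero fun f hf => ?_
  obtain ⟨a', b', hab', rfl⟩ := hc hf
  rw [minus_adj] at hab'
  exact g2alpha _ _ _ _ _ _ hab'.2.1 hab'.2.2 hab'.1 hnadj

lemma factL4 (hp2 : p ∈ binomialEdgeIdeal F (minusVertex G s)) (a b : Fin n)
    (hnadj : ¬ G.Adj a b) :
    coeff (sgl (inr s) + sgl (inl a) + sgl (inr b)) p = 0 := by
  rw [binomialEdgeIdeal] at hp2
  obtain ⟨c, hc, hco⟩ := rep_coeff hp2
  rw [hco]
  refine Finset.sum_eq_zero fun f hf => ?_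
  obtain ⟨a', b', hab', rfl⟩ := hc hf
  rw [minus_adj] at hab'
  exact g2beta _ _ _ _ _ _ hab'.2.1 hab'.2.2 hab'.1 hnadj

lemma factL5 (hp2 : p ∈ binomialEdgeIdeal F (minusVertex G s)) (a b : Fin n) :
    coeff (sgl (inr s) + sgl (inl a) + sgl (inl b)) p = 0 := by
  by_contra h0
  have hm : (sgl (inr s) + sgl (inl a) + sgl (inl b) : (Fin n ⊕ Fin n) →₀ ℕ)
      ∈ p.support := MvPolynomial.mem_support_iff.2 h0
  obtain ⟨a', b', hadj, ha', hb', h1, h2⟩ := suppJ2 hp2 _ hm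
  rw [app3] at h2
  simp [Ne.symm hb'] at h2

lemma factL6 (hp2 : p ∈ binomialEdgeIdeal F (minusVertex G s)) (a b : Fin n) :
    coeff (sgl (inl s) + sgl (inr a) + sgl (inr b)) p = 0 := by
  by_contra h0
  have hm : (sgl (inl s) + sgl (inr a) + sgl (inr b) : (Fin n ⊕ Fin n) →₀ ℕ)
      ∈ p.support := MvPolynomial.mem_support_iff.2 h0
  obtain ⟨a', b', hadj, ha', hb', h1, h2⟩ := suppJ2 hp2 _ hm
  rw [app3] at h1
  simp [Ne.symm ha'] at h1

lemma factL7 (hp1 : p ∈ binomialEdgeIdeal F (starAt G s))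
    (hp2 : p ∈ binomialEdgeIdeal F (minusVertex G s)) (a b : Fin n)
    (ha : a ≠ s) (hb : b ≠ s) (hab : a ≠ b) :
    coeff (sgl (inl s) + sgl (inl a) + sgl (inr b)) p
      + coeff (sgl (inl s) + sgl (inl b) + sgl (inr a)) p = 0 := by
  have hγ := factL5 hp2 a b
  rw [star_span] at hp1
  obtain ⟨c, hc, hco⟩ := rep_coeff hp1
  have key : ∀ f ∈ c.support,
      coeff (sgl (inr s) + sgl (inl a) + sgl (inl b)) (c f * f)
        = -(coeff (sgl (inl s) + sgl (inl a) + sgl (inr b)) (c f * f)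
            + coeff (sgl (inl s) + sgl (inl b) + sgl (inr a)) (c f * f)) := by
    intro f hf
    obtain ⟨k, hk, rfl⟩ := hc hf
    rw [g1gamma _ _ _ _ _ ha hb hk.ne' hab, g1alpha _ _ _ _ _ ha hb, g1alpha _ _ _ _ _ hb ha]
  have h1 : ∑ f ∈ c.support,
      -(coeff (sgl (inl s) + sgl (inl a) + sgl (inr b)) (c f * f)
        + coeff (sgl (inl s) + sgl (inl b) + sgl (inr a)) (c f * f)) = 0 := by
    rw [← Finset.sum_congr rfl key, ← hco]
    exact hγ
  rw [Finset.sum_neg_distrib, neg_eq_zero, Finset.sum_add_distrib] at h1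
  rw [hco, hco]
  exact h1

lemma factL8 (hp1 : p ∈ binomialEdgeIdeal F (starAt G s))
    (hp2 : p ∈ binomialEdgeIdeal F (minusVertex G s)) (a b : Fin n)
    (ha : a ≠ s) (hb : b ≠ s) (hab : a ≠ b) :
    coeff (sgl (inr s) + sgl (inl a) + sgl (inr b)) p
      + coeff (sgl (inr s) + sgl (inl b) + sgl (inr a)) p = 0 := by
  have hδ := factL6 hp2 a b
  rw [star_span] at hp1
  obtain ⟨c, hc, hco⟩ := rep_coeff hp1
  have key : ∀ f ∈ c.support,
      coeff (sgl (inl s) + sgl (inr a) + sgl (inr b)) (c f * f)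
        = -(coeff (sgl (inr s) + sgl (inl a) + sgl (inr b)) (c f * f)
            + coeff (sgl (inr s) + sgl (inl b) + sgl (inr a)) (c f * f)) := by
    intro f hf
    obtain ⟨k, hk, rfl⟩ := hc hf
    rw [g1delta _ _ _ _ _ ha hb hab, g1beta _ _ _ _ _ ha hb, g1beta _ _ _ _ _ hb ha]
  have h1 : ∑ f ∈ c.support,
      -(coeff (sgl (inr s) + sgl (inl a) + sgl (inr b)) (c f * f)
        + coeff (sgl (inr s) + sgl (inl b) + sgl (inr a)) (c f * f)) = 0 := by
    rw [← Finset.sum_congr rfl key, ← hco]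
    exact hδ
  rw [Finset.sum_neg_distrib, neg_eq_zero, Finset.sum_add_distrib] at h1
  rw [hco, hco]
  exact h1

lemma alphaZero (htf : G.CliqueFree 3)
    (hp1 : p ∈ binomialEdgeIdeal F (starAt G s))
    (hp2 : p ∈ binomialEdgeIdeal F (minusVertex G s)) (a b : Fin n)
    (ha : a ≠ s) (hb : b ≠ s) :
    coeff (sgl (inl s) + sgl (inl a) + sgl (inr b)) p = 0 := by
  by_contra h0
  have hadj : G.Adj a b := by
    by_contra hn; exact h0 (factL3 hp2 a b hn)
  have hsb : G.Adj s b := by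
    by_contra hn; exact h0 (factL1 hp1 a b ha hb hn)
  have hab : a ≠ b := hadj.ne
  have h7 := factL7 hp1 hp2 a b ha hb hab
  have h0' : coeff (sgl (inl s) + sgl (inl b) + sgl (inr a)) p ≠ 0 := by
    intro hz; rw [hz, add_zero] at h7; exact h0 h7
  have hsa : G.Adj s a := by
    by_contra hn; exact h0' (factL1 hp1 b a hb ha hn)
  exact htf {s, a, b} (SimpleGraph.is3Clique_triple_iff.2 ⟨hsa, hsb, hadj⟩)

lemma betaZero (htf : G.CliqueFree 3)
    (hp1 : p ∈ binomialEdgeIdeal F (starAt G s))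
    (hp2 : p ∈ binomialEdgeIdeal F (minusVertex G s)) (a b : Fin n)
    (ha : a ≠ s) (hb : b ≠ s) :
    coeff (sgl (inr s) + sgl (inl a) + sgl (inr b)) p = 0 := by
  by_contra h0
  have hadj : G.Adj a b := by
    by_contra hn; exact h0 (factL4 hp2 a b hn)
  have hsa : G.Adj s a := by
    by_contra hn; exact h0 (factL2 hp1 a b ha hb hn)
  have hab : a ≠ b := hadj.ne
  have h8 := factL8 hp1 hp2 a b ha hb hab
  have h0' : coeff (sgl (inr s) + sgl (inl b) + sgl (inr a)) p ≠ 0 := by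
    intro hz; rw [hz, add_zero] at h8; exact h0 h8
  have hsb : G.Adj s b := by
    by_contra hn; exact h0' (factL2 hp1 b a hb ha hn)
  exact htf {s, a, b} (SimpleGraph.is3Clique_triple_iff.2 ⟨hsa, hsb, hadj⟩)

end Facts

lemma vanish_low (htf : G.CliqueFree 3) {p : PolyBEI F n} {d : ℕ}
    (hp1 : p ∈ binomialEdgeIdeal F (starAt G s))
    (hp2 : p ∈ binomialEdgeIdeal F (minusVertex G s))
    (hd : p.IsHomogeneous d) (hd4 : d < 4) : p = 0 := by
  classical
  rw [← MvPolynomial.support_eq_empty]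
  rw [Finset.eq_empty_iff_forall_notMem]
  intro m hm
  have hdeg : m.degree = d := by
    have := hd (MvPolynomial.mem_support_iff.1 hm)
    rw [Finsupp.degree_eq_weight_one]
    exact this
  obtain ⟨a, b, hadj, ha, hb, hma, hmb⟩ := suppJ2 hp2 m hm
  have hs := suppJ1 hp1 m hm
  have huniv : ∑ i : Fin n ⊕ Fin n, m i = d := by
    rw [← hdeg, Finsupp.degree]
    exact (Finset.sum_subset (Finset.subset_univ _)
      (fun i _ hi => Finsupp.notMem_support_iff.1 hi)).symm
  obtain ⟨t, hmt1, hts⟩ : ∃ t, 1 ≤ m t ∧ (t = (inl s : Fin n ⊕ Fin n) ∨ t = inr s) := by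
    by_cases h : 1 ≤ m (inl s)
    · exact ⟨inl s, h, Or.inl rfl⟩
    · exact ⟨inr s, by omega, Or.inr rfl⟩
  have htne1 : t ≠ inl a := by
    rcases hts with rfl | rfl
    · exact fun hq => ha (Sum.inl.inj hq).symm
    · simp
  have htne2 : t ≠ inr b := by
    rcases hts with rfl | rfl
    · simp
    · exact fun hq => hb (Sum.inr.inj hq).symm
  have hab' : (inl a : Fin n ⊕ Fin n) ≠ inr b := by simp
  have h3 : m t + m (inl a) + m (inr b) ≤ d := by
    have hsl := Finset.sum_le_sum_of_subset
      (Finset.subset_univ ({t, inl a, inr b} : Finset (Fin n ⊕ Fin n))) (f := m)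
    rw [Finset.sum_insert (by simp [htne1, htne2]),
      Finset.sum_insert (by simp [hab']), Finset.sum_singleton] at hsl
    omega
  have hd3 : d = 3 := by omega
  have hle : ∀ i, (sgl t + sgl (inl a) + sgl (inr b)) i ≤ m i := by
    intro i
    rw [app3]
    by_cases h1 : i = t
    · subst h1
      rw [if_pos rfl, if_neg (Ne.symm htne1), if_neg (Ne.symm htne2)]
      omega
    by_cases h2 : i = inl a
    · subst h2
      rw [if_neg htne1, if_pos rfl, if_neg (by simp)]
      omega
    by_cases h3' : i = inr b
    · subst h3'
      rw [if_neg htne2, if_neg (by simp), if_pos rfl]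
      omega
    · rw [if_neg (fun hq => h1 hq.symm), if_neg (fun hq => h2 hq.symm),
        if_neg (fun hq => h3' hq.symm)]
      omega
  have hsums : ∑ i : Fin n ⊕ Fin n, (sgl t + sgl (inl a) + sgl (inr b)) i = 3 := by
    simp [app3, Finset.sum_add_distrib, Finset.sum_ite_eq]
  have hm_eq : m = sgl t + sgl (inl a) + sgl (inr b) := by
    by_contra hne
    have hex : ∃ i, (sgl t + sgl (inl a) + sgl (inr b)) i ≠ m i := by
      by_contra hno
      push_neg at hno
      exact hne (Finsupp.ext fun i => (hno i)).symm
    obtain ⟨i, hi⟩ := hex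
    have hlt : (sgl t + sgl (inl a) + sgl (inr b)) i < m i := lt_of_le_of_ne (hle i) hi
    have := Finset.sum_lt_sum (fun j (_ : j ∈ Finset.univ) => hle j)
      ⟨i, Finset.mem_univ i, hlt⟩
    omega
  have hcoeff := MvPolynomial.mem_support_iff.1 hm
  rcases hts with rfl | rfl
  · rw [hm_eq] at hcoeff
    exact hcoeff (alphaZero htf hp1 hp2 a b ha hb)
  · rw [hm_eq] at hcoeff
    exact hcoeff (betaZero htf hp1 hp2 a b ha hb)

end SPart

attribute [local instance] MvPolynomial.gradedAlgebra

/-- If `G` is triangle-free, then for any `s`-partition `J_G = J_{G_1} + J_{G_2}` the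
intersection `J_{G_1} ∩ J_{G_2}` has no generators of degree 3: it is generated by
homogeneous elements of degree at least 4. -/
theorem s_partition_intersection_generated_in_degree_ge_four
    (F : Type) [Field F] {n : ℕ} (G : SimpleGraph (Fin n)) (s : Fin n)
    (htf : G.CliqueFree 3) :
    ∃ S : Set (PolyBEI F n),
      Ideal.span S = binomialEdgeIdeal F (starAt G s) ⊓ binomialEdgeIdeal F (minusVertex G s) ∧
      ∀ g ∈ S, ∃ d : ℕ, 4 ≤ d ∧ g ∈ homogeneousSubmodule (Fin n ⊕ Fin n) F d := by
  classical
  have hhom : ∀ H : SimpleGraph (Fin n),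
      (binomialEdgeIdeal F H).IsHomogeneous (homogeneousSubmodule (Fin n ⊕ Fin n) F) := by
    intro H
    rw [binomialEdgeIdeal]
    apply Ideal.homogeneous_span
    rintro f ⟨a, b, hab, rfl⟩
    exact ⟨2, SPart.edgeBinomial_isHomogeneous a b⟩
  have hdecomp : ∀ (r : PolyBEI F n) (i : ℕ),
      (DirectSum.decompose (homogeneousSubmodule (Fin n ⊕ Fin n) F) r i : PolyBEI F n)
        = homogeneousComponent i r := fun r i =>
    MvPolynomial.decomposition.decompose'_apply r i
  refine ⟨{g | (g ∈ binomialEdgeIdeal F (starAt G s) ⊓ binomialEdgeIdeal F (minusVertex G s)) ∧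
      ∃ d : ℕ, 4 ≤ d ∧ g ∈ homogeneousSubmodule (Fin n ⊕ Fin n) F d}, ?_, fun g hg => hg.2⟩
  apply le_antisymm
  · rw [Ideal.span_le]
    exact fun g hg => hg.1
  · intro g hg
    have hg1 : g ∈ binomialEdgeIdeal F (starAt G s) := (Submodule.mem_inf.1 hg).1
    have hg2 : g ∈ binomialEdgeIdeal F (minusVertex G s) := (Submodule.mem_inf.1 hg).2
    rw [← MvPolynomial.sum_homogeneousComponent g]
    apply Ideal.sum_mem
    intro i _
    have hci1 : homogeneousComponent i g ∈ binomialEdgeIdeal F (starAt G s) := by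
      have := hhom (starAt G s) i hg1
      rwa [hdecomp] at this
    have hci2 : homogeneousComponent i g ∈ binomialEdgeIdeal F (minusVertex G s) := by
      have := hhom (minusVertex G s) i hg2
      rwa [hdecomp] at this
    by_cases h4 : 4 ≤ i
    · exact Ideal.subset_span
        ⟨Submodule.mem_inf.2 ⟨hci1, hci2⟩, i, h4, homogeneousComponent_mem i g⟩
    · rw [SPart.vanish_low htf hci1 hci2 (homogeneousComponent_isHomogeneous i g) (by omega)]
      exact zero_mem _
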